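/- (Theorem 3, dual rate) Let σ > 0 and α ∈ (1/2, 1], and suppose the tolerance sequence is η_k = σ/k^{2α} for all k ≥ 1. Then for all k ≥ 1: δ_k ≤ C/k^α, where C := 4√(3((3/2)θσ + 1)σ/θ) + (4/3)·max{δ₁, 4/θ}. -/

import Mathlib

/-!
The approximate optimality condition and the gradient inequality for `f` give
`L_β(x⁺;λ) + (β/2)‖A(y − x⁺)‖² ≤ L_β(y;λ) + η` for every `y`. Evaluating this at minimisers of
`L_β(·;λ)` and of `L_β(·;λ⁺)` yields, with the residual `r = Ax⁺ − b`, the ascent inequality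
`δ⁺ + (β/2)‖r‖² ≤ δ + η` and the bound `δ ≤ η + ⟪λ* − λ, r⟫`. Together they give
`‖λ⁺ − λ*‖² ≤ ‖λ − λ*‖² + 4βη`, so every multiplier satisfies `‖λ^k − λ*‖² ≤ 2B²`, and
Cauchy–Schwarz turns the ascent inequality into the recursion
`δ_{k+1} + θ(δ_{k+1} − 2η_k)² ≤ δ_k + η_k` whenever `δ_{k+1} ≥ 2η_k`.
The constant `C` is chosen so that `4σ ≤ C` and `C + σ ≤ θ(C/2 − 2σ)²`; with these the bound
`δ_k ≤ C/k^α` passes from `k` to `k + 1`, since `t ↦ t + θ(t − 2η_k)²` is increasing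
for `t ≥ 2η_k`.
-/

open RealInnerProductSpace

theorem ConvexOn.add_fderiv_le {E : Type*} [NormedAddCommGroup E] [NormedSpace ℝ E]
    {s : Set E} {f : E → ℝ} {f' : E →L[ℝ] ℝ} {p q : E} (hf : ConvexOn ℝ s f)
    (hp : p ∈ s) (hq : q ∈ s) (hf' : HasFDerivAt f f' p) : f p + f' (q - p) ≤ f q := by
  let ℓ : ℝ →ᵃ[ℝ] E := AffineMap.lineMap p q
  have hℓ0 : ℓ 0 = p := AffineMap.lineMap_apply_zero p q
  have hℓ1 : ℓ 1 = q := AffineMap.lineMap_apply_one p q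
  have hderiv : HasDerivAt (f ∘ ℓ) (f' (q - p)) 0 :=
    (hℓ0 ▸ hf').comp_hasDerivAt 0 AffineMap.hasDerivAt_lineMap
  have hslope := (hf.comp_affineMap ℓ).le_slope_of_hasDerivAt (x := 0) (y := 1)
    (by simpa [hℓ0]) (by simpa [hℓ1]) one_pos hderiv
  simp only [slope_def_field, Function.comp_apply, hℓ0, hℓ1, sub_zero, div_one] at hslope
  linarith

theorem ConvexOn.add_inner_le_of_hasGradientAt {E : Type*} [NormedAddCommGroup E]
    [InnerProductSpace ℝ E] [CompleteSpace E] {s : Set E} {f : E → ℝ} {f' : E} {p q : E}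
    (hf : ConvexOn ℝ s f) (hp : p ∈ s) (hq : q ∈ s) (hf' : HasGradientAt f f' p) :
    f p + ⟪f', q - p⟫ ≤ f q :=
  hf.add_fderiv_le hp hq (hasGradientAt_iff_hasFDerivAt.mp hf')

theorem le_add_tsum_of_le_add {u c : ℕ → ℝ} (hc : ∀ k, 0 ≤ c k) (hcs : Summable c)
    (h : ∀ k, u (k + 1) ≤ u k + c k) (k : ℕ) : u k ≤ u 0 + ∑' j, c j := by
  have hpartial : u k ≤ u 0 + ∑ j ∈ Finset.range k, c j := by
    induction k with
    | zero => simp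
    | succ k ih => rw [Finset.sum_range_succ]; linarith [h k]
  linarith [hcs.sum_le_tsum (Finset.range k) fun j _ => hc j]

theorem summable_succ_of_eq_div_rpow {η : ℕ → ℝ} {σ p : ℝ} (hp : 1 < p)
    (hη : ∀ k, 1 ≤ k → η k = σ / (k : ℝ) ^ p) : Summable fun k => η (k + 1) := by
  refine ((summable_nat_add_iff 1).2 ((Real.summable_one_div_nat_rpow.2 hp).mul_left σ)).congr
    fun k => ?_
  rw [hη (k + 1) k.succ_pos]
  push_cast
  ring

section AugmentedLagrangian

variable {E F : Type*} [NormedAddCommGroup E] [InnerProductSpace ℝ E]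
  [NormedAddCommGroup F] [InnerProductSpace ℝ F]

noncomputable def augLagrangian (f g : E → ℝ) (A : E →L[ℝ] F) (b : F) (β : ℝ) (x : E) (lam : F) :
    ℝ :=
  f x + ⟪lam, A x - b⟫ + β / 2 * ‖A x - b‖ ^ 2 + g x

def IsApproxALSolution [CompleteSpace E] [CompleteSpace F] (g : E → ℝ) (A : E →L[ℝ] F) (b : F)
    (β : ℝ) (f' : E → E) (η : ℝ) (lam : F) (x : E) : Prop :=
  ∀ y, ⟪f' x + A.adjoint (lam + β • (A x - b)), x - y⟫ + g x - g y ≤ η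

variable {f g : E → ℝ} {A : E →L[ℝ] F} {b : F} {β : ℝ}

theorem augLagrangian_eq_add_inner (x : E) (lam μ : F) :
    augLagrangian f g A b β x μ = augLagrangian f g A b β x lam + ⟪μ - lam, A x - b⟫ := by
  simp only [augLagrangian, inner_sub_left]
  ring

variable [CompleteSpace E] [CompleteSpace F]

namespace IsApproxALSolution

variable {f' : E → E} {η : ℝ} {lam : F} {x : E}

theorem augLagrangian_add_le (hx : IsApproxALSolution g A b β f' η lam x)
    (hf : ConvexOn ℝ Set.univ f) (hf' : HasGradientAt f (f' x) x) (y : E) :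
    augLagrangian f g A b β x lam + β / 2 * ‖A y - A x‖ ^ 2
      ≤ augLagrangian f g A b β y lam + η := by
  have hgrad := hf.add_inner_le_of_hasGradientAt trivial trivial hf' (q := y)
  have happrox := hx y
  rw [inner_add_left, ContinuousLinearMap.adjoint_inner_left, map_sub,
    show A x - A y = (A x - b) - (A y - b) by abel] at happrox
  rw [augLagrangian, augLagrangian, show A y - A x = (A y - b) - (A x - b) by abel]
  generalize A x - b = r at happrox ⊢
  generalize A y - b = s at happrox ⊢
  simp only [inner_add_left, inner_sub_right, real_inner_smul_left,
    real_inner_self_eq_norm_sq] at happrox hgrad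
  rw [norm_sub_sq_real, real_inner_comm r s]
  linarith

variable {d : F → ℝ}

theorem augLagrangian_le_dual_add (hx : IsApproxALSolution g A b β f' η lam x) (hβ : 0 ≤ β)
    (hf : ConvexOn ℝ Set.univ f) (hf' : HasGradientAt f (f' x) x)
    (hd : ∀ μ, IsLeast (Set.range fun y => augLagrangian f g A b β y μ) (d μ)) :
    augLagrangian f g A b β x lam ≤ d lam + η := by
  obtain ⟨y, hy⟩ := (hd lam).1
  have hnorm : 0 ≤ β / 2 * ‖A y - A x‖ ^ 2 := by positivity
  linarith [hx.augLagrangian_add_le hf hf' y, show augLagrangian f g A b β y lam = d lam from hy]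

theorem dual_le_add_inner (hx : IsApproxALSolution g A b β f' η lam x) (hβ : 0 ≤ β)
    (hf : ConvexOn ℝ Set.univ f) (hf' : HasGradientAt f (f' x) x)
    (hd : ∀ μ, IsLeast (Set.range fun y => augLagrangian f g A b β y μ) (d μ))
    (μ : F) : d μ ≤ d lam + η + ⟪μ - lam, A x - b⟫ := by
  have hμ : d μ ≤ augLagrangian f g A b β x μ := (hd μ).2 ⟨x, rfl⟩
  rw [augLagrangian_eq_add_inner x lam μ] at hμ
  linarith [hx.augLagrangian_le_dual_add hβ hf hf' hd]

theorem dual_add_sq_le (hx : IsApproxALSolution g A b β f' η lam x) (hβ : 0 ≤ β)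
    (hf : ConvexOn ℝ Set.univ f) (hf' : HasGradientAt f (f' x) x)
    (hd : ∀ μ, IsLeast (Set.range fun y => augLagrangian f g A b β y μ) (d μ)) :
    d lam + β / 2 * ‖A x - b‖ ^ 2 ≤ d (lam + β • (A x - b)) + η := by
  obtain ⟨y, hy⟩ := (hd (lam + β • (A x - b))).1
  have hmin : d lam ≤ augLagrangian f g A b β x lam := (hd lam).2 ⟨x, rfl⟩
  have hkey := hx.augLagrangian_add_le hf hf' y
  have hshift : augLagrangian f g A b β y (lam + β • (A x - b))
      = augLagrangian f g A b β y lam + β * ⟪A x - b, A y - b⟫ := by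
    rw [augLagrangian_eq_add_inner y lam, add_sub_cancel_left, real_inner_smul_left]
  rw [show A y - A x = (A y - b) - (A x - b) by abel, norm_sub_sq_real, real_inner_comm] at hkey
  have hnorm : 0 ≤ β / 2 * ‖A y - b‖ ^ 2 := by positivity
  linarith [show augLagrangian f g A b β y (lam + β • (A x - b)) = _ from hy]

theorem norm_sub_sq_le (hx : IsApproxALSolution g A b β f' η lam x) (hβ : 0 ≤ β)
    (hf : ConvexOn ℝ Set.univ f) (hf' : HasGradientAt f (f' x) x)
    (hd : ∀ μ, IsLeast (Set.range fun y => augLagrangian f g A b β y μ) (d μ))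
    {lamstar : F} (hstar : ∀ μ, d μ ≤ d lamstar) :
    ‖lam + β • (A x - b) - lamstar‖ ^ 2 ≤ ‖lam - lamstar‖ ^ 2 + 4 * β * η := by
  have hdual := hx.dual_le_add_inner hβ hf hf' hd lamstar
  rw [show lamstar - lam = -(lam - lamstar) by abel, inner_neg_left] at hdual
  have hgap : β / 2 * ‖A x - b‖ ^ 2 + ⟪lam - lamstar, A x - b⟫ ≤ 2 * η := by
    linarith [hx.dual_add_sq_le hβ hf hf' hd, hstar (lam + β • (A x - b))]
  rw [show lam + β • (A x - b) - lamstar = (lam - lamstar) + β • (A x - b) by abel,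
    norm_add_sq_real, norm_smul, real_inner_smul_right, Real.norm_eq_abs, abs_of_nonneg hβ]
  nlinarith [mul_le_mul_of_nonneg_left hgap hβ]

theorem gap_recursion (hx : IsApproxALSolution g A b β f' η lam x) (hβ : 0 ≤ β)
    (hf : ConvexOn ℝ Set.univ f) (hf' : HasGradientAt f (f' x) x)
    (hd : ∀ μ, IsLeast (Set.range fun y => augLagrangian f g A b β y μ) (d μ))
    {lamstar : F} {θ D : ℝ} (hθ : 0 ≤ θ) (hθD : 2 * θ * D ≤ β)
    (hD : ‖lam - lamstar‖ ^ 2 ≤ D) (hη : 2 * η ≤ d lamstar - d (lam + β • (A x - b))) :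
    d lamstar - d (lam + β • (A x - b)) + θ * (d lamstar - d (lam + β • (A x - b)) - 2 * η) ^ 2
      ≤ d lamstar - d lam + η := by
  have hascent := hx.dual_add_sq_le hβ hf hf' hd
  have hcs : ⟪lamstar - lam, A x - b⟫ ≤ ‖lam - lamstar‖ * ‖A x - b‖ :=
    norm_sub_rev lam lamstar ▸ real_inner_le_norm _ _
  have hgap : d lamstar - d (lam + β • (A x - b)) - 2 * η ≤ ‖lam - lamstar‖ * ‖A x - b‖ := by
    have hnorm : 0 ≤ β / 2 * ‖A x - b‖ ^ 2 := by positivity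
    linarith [hx.dual_le_add_inner hβ hf hf' hd lamstar]
  have hsq : (d lamstar - d (lam + β • (A x - b)) - 2 * η) ^ 2 ≤ D * ‖A x - b‖ ^ 2 :=
    calc _ ≤ (‖lam - lamstar‖ * ‖A x - b‖) ^ 2 := pow_le_pow_left₀ (by linarith) hgap 2
      _ ≤ D * ‖A x - b‖ ^ 2 := by rw [mul_pow]; gcongr
  have hθsq : θ * (d lamstar - d (lam + β • (A x - b)) - 2 * η) ^ 2 ≤ β / 2 * ‖A x - b‖ ^ 2 :=
    calc _ ≤ θ * (D * ‖A x - b‖ ^ 2) := mul_le_mul_of_nonneg_left hsq hθ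
      _ ≤ β / 2 * ‖A x - b‖ ^ 2 := by nlinarith [sq_nonneg ‖A x - b‖]
  linarith

end IsApproxALSolution

theorem norm_sub_sq_le_add_tsum {f' : E → E} {d : F → ℝ} {x : ℕ → E} {lam : ℕ → F} {η : ℕ → ℝ}
    {lamstar : F} (hβ : 0 ≤ β) (hf : ConvexOn ℝ Set.univ f) (hf' : ∀ x, HasGradientAt f (f' x) x)
    (hd : ∀ μ, IsLeast (Set.range fun y => augLagrangian f g A b β y μ) (d μ))
    (hstar : ∀ μ, d μ ≤ d lamstar)
    (hx : ∀ k, 1 ≤ k → IsApproxALSolution g A b β f' (η k) (lam k) (x (k + 1)))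
    (hlam : ∀ k, 1 ≤ k → lam (k + 1) = lam k + β • (A (x (k + 1)) - b))
    (hη : ∀ k, 1 ≤ k → 0 ≤ η k) (hsum : Summable fun k => η (k + 1)) (k : ℕ) (hk : 1 ≤ k) :
    ‖lam k - lamstar‖ ^ 2 ≤ ‖lam 1 - lamstar‖ ^ 2 + 4 * β * ∑' k, η (k + 1) := by
  obtain ⟨k, rfl⟩ := Nat.exists_eq_add_of_le' hk
  rw [← tsum_mul_left]
  refine le_add_tsum_of_le_add (u := fun j => ‖lam (j + 1) - lamstar‖ ^ 2)
    (fun j => mul_nonneg (by positivity) (hη (j + 1) j.succ_pos)) (hsum.mul_left (4 * β))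
    (fun j => ?_) k
  rw [hlam (j + 1) j.succ_pos]
  exact (hx (j + 1) j.succ_pos).norm_sub_sq_le hβ hf (hf' _) hd hstar

end AugmentedLagrangian

theorem dual_rate_constant_bounds {θ σ M C : ℝ} (hθ : 0 < θ) (hσ : 0 < σ) (hM : 4 / θ ≤ M)
    (hC : C = 4 * √(3 * (3 / 2 * θ * σ + 1) * σ / θ) + 4 / 3 * M) :
    M ≤ C ∧ 4 * σ ≤ C ∧ C + σ ≤ θ * (C / 2 - 2 * σ) ^ 2 := by
  set S := 4 * √(3 * (3 / 2 * θ * σ + 1) * σ / θ) with hS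
  have hS0 : 0 ≤ S := by positivity
  have hθS : θ * S ^ 2 = 72 * θ * σ ^ 2 + 48 * σ := by
    rw [hS, mul_pow, Real.sq_sqrt (by positivity)]
    field_simp
    ring
  have hS2 : 72 * σ ^ 2 ≤ S ^ 2 := by nlinarith
  have hS8 : 8 * σ ≤ S := by nlinarith
  have hθM : 4 ≤ θ * M := by rwa [div_le_iff₀' hθ] at hM
  have hM0 : 0 ≤ M := by nlinarith
  refine ⟨by linarith, by linarith, ?_⟩
  have hmono : θ * (S / 4 + 2 / 3 * M) ^ 2 ≤ θ * (C / 2 - 2 * σ) ^ 2 := by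
    gcongr
    linarith
  nlinarith [mul_le_mul_of_nonneg_right hθM hS0, mul_le_mul_of_nonneg_right hθM hM0]

theorem le_mul_of_gap_recursion {θ σ C p q δ δ' : ℝ} (hθ : 0 ≤ θ) (hσ : 0 ≤ σ)
    (hC : 4 * σ ≤ C) (hCθ : C + σ ≤ θ * (C / 2 - 2 * σ) ^ 2)
    (hq : 0 ≤ q) (hqp : q ≤ p) (hp : p ≤ 1) (hpq : p ≤ 2 * q) (hpq' : p - q ≤ p ^ 2)
    (hδ : δ ≤ C * p)
    (hrec : 2 * (σ * p ^ 2) ≤ δ' → δ' + θ * (δ' - 2 * (σ * p ^ 2)) ^ 2 ≤ δ + σ * p ^ 2) :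
    δ' ≤ C * q := by
  have hp0 : 0 ≤ p := hq.trans hqp
  have hσp : σ * p ^ 2 ≤ σ * p := by nlinarith [mul_nonneg hσ hp0]
  have hηq : 2 * (σ * p ^ 2) ≤ C * q := by nlinarith
  have hmid : C * p + σ * p ^ 2 ≤ C * q + θ * (C * q - 2 * (σ * p ^ 2)) ^ 2 := by
    have hlin : (C / 2 - 2 * σ) * p ≤ C * q - 2 * (σ * p ^ 2) := by nlinarith
    have hsq : θ * ((C / 2 - 2 * σ) * p) ^ 2 ≤ θ * (C * q - 2 * (σ * p ^ 2)) ^ 2 := by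
      gcongr
      exact mul_nonneg (by linarith) hp0
    have hCp : (C + σ) * p ^ 2 ≤ θ * ((C / 2 - 2 * σ) * p) ^ 2 := by
      rw [mul_pow, ← mul_assoc]
      exact mul_le_mul_of_nonneg_right hCθ (sq_nonneg p)
    nlinarith [mul_le_mul_of_nonneg_left hpq' (show 0 ≤ C by linarith)]
  by_contra! hlt
  have hgap : θ * (C * q - 2 * (σ * p ^ 2)) ^ 2 ≤ θ * (δ' - 2 * (σ * p ^ 2)) ^ 2 := by
    gcongr
  linarith [hrec (by linarith)]

theorem le_div_rpow_of_gap_recursion {θ σ α C : ℝ} {η δ : ℕ → ℝ} (hθ : 0 ≤ θ) (hσ : 0 ≤ σ)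
    (hα : 0 < α) (hα1 : α ≤ 1) (hC : 4 * σ ≤ C) (hCθ : C + σ ≤ θ * (C / 2 - 2 * σ) ^ 2)
    (hη : ∀ k, 1 ≤ k → η k = σ / (k : ℝ) ^ (2 * α)) (hδ1 : δ 1 ≤ C)
    (hrec : ∀ k, 1 ≤ k → 2 * η k ≤ δ (k + 1) →
      δ (k + 1) + θ * (δ (k + 1) - 2 * η k) ^ 2 ≤ δ k + η k) :
    ∀ k, 1 ≤ k → δ k ≤ C / (k : ℝ) ^ α := by
  intro k hk
  induction k, hk using Nat.le_induction with
  | base => simpa using hδ1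
  | succ k hk ih =>
    have hk1 : (1 : ℝ) ≤ k := by exact_mod_cast hk
    have ha : 1 ≤ (k : ℝ) ^ α := Real.one_le_rpow hk1 hα.le
    have haa' : (k : ℝ) ^ α ≤ ((k : ℝ) + 1) ^ α := by gcongr; linarith
    have ha'a : ((k : ℝ) + 1) ^ α ≤ (k : ℝ) ^ α + 1 := by
      simpa using Real.rpow_add_le_add_rpow (by linarith) zero_le_one hα.le hα1
    have hηk : η k = σ * (((k : ℝ) ^ α)⁻¹) ^ 2 := by
      rw [hη k hk, mul_comm, Real.rpow_mul (by linarith), Real.rpow_two, inv_pow, div_eq_mul_inv]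
    set a := (k : ℝ) ^ α
    set a' := ((k : ℝ) + 1) ^ α
    have ha0 : 0 < a := by positivity
    have ha'0 : 0 < a' := by positivity
    have hdiff : a⁻¹ - a'⁻¹ = a⁻¹ * a'⁻¹ * (a' - a) := by field_simp
    have hq : 0 ≤ a'⁻¹ := by positivity
    have hqp : a'⁻¹ ≤ a⁻¹ := inv_anti₀ (by positivity) haa'
    have hpq : a⁻¹ ≤ 2 * a'⁻¹ := by
      rw [show 2 * a'⁻¹ = (a' / 2)⁻¹ by field_simp]
      exact inv_anti₀ (by positivity) (by linarith)
    have hpq' : a⁻¹ - a'⁻¹ ≤ a⁻¹ ^ 2 := by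
      rw [hdiff]
      nlinarith [mul_nonneg (inv_nonneg.2 (zero_le_one.trans ha)) hq]
    have hstep := le_mul_of_gap_recursion hθ hσ hC hCθ hq hqp (inv_le_one_of_one_le₀ ha) hpq hpq'
      (by rwa [div_eq_mul_inv] at ih) (hηk ▸ hrec k hk)
    push_cast
    rwa [div_eq_mul_inv]

theorem ial_dual_rate_general
    {n m : ℕ}
    (A : EuclideanSpace ℝ (Fin n) →L[ℝ] EuclideanSpace ℝ (Fin m))
    (b : EuclideanSpace ℝ (Fin m))
    (f g : EuclideanSpace ℝ (Fin n) → ℝ)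
    (f' : EuclideanSpace ℝ (Fin n) → EuclideanSpace ℝ (Fin n))
    (hf : ConvexOn ℝ Set.univ f)
    (hf' : ∀ x, HasGradientAt f (f' x) x)
    (β : ℝ) (hβ : 0 < β)
    (L : EuclideanSpace ℝ (Fin n) → EuclideanSpace ℝ (Fin m) → ℝ)
    (hL : ∀ x lam, L x lam
        = f x + ⟪lam, A x - b⟫ + β / 2 * ‖A x - b‖ ^ 2 + g x)
    (d : EuclideanSpace ℝ (Fin m) → ℝ)
    (hd : ∀ lam, IsLeast (Set.range fun x => L x lam) (d lam))
    (x : ℕ → EuclideanSpace ℝ (Fin n))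
    (lam : ℕ → EuclideanSpace ℝ (Fin m))
    (σ α : ℝ) (hσ : 0 < σ) (hα : 1 / 2 < α ∧ α ≤ 1)
    (η : ℕ → ℝ)
    (hη : ∀ k, 1 ≤ k → η k = σ / (k : ℝ) ^ (2 * α))
    (happrox : ∀ k, 1 ≤ k → ∀ y,
        ⟪f' (x (k + 1)) + A.adjoint (lam k + β • (A (x (k + 1)) - b)), x (k + 1) - y⟫
          + g (x (k + 1)) - g y ≤ η k)
    (hlam : ∀ k, 1 ≤ k → lam (k + 1) = lam k + β • (A (x (k + 1)) - b))
    (lamstar : EuclideanSpace ℝ (Fin m))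
    (hstar : ∀ μ, d μ ≤ d lamstar)
    (δ : ℕ → ℝ)
    (hδ : ∀ k, δ k = d lamstar - d (lam k))
    (B : ℝ)
    (hB : B = Real.sqrt (‖lam 1 - lamstar‖ ^ 2 + 2 * β * ∑' k : ℕ, η (k + 1)))
    (θ : ℝ)
    (hθ : θ = β / (4 * B ^ 2))
    (C : ℝ)
    (hC : C = 4 * Real.sqrt (3 * (3 / 2 * θ * σ + 1) * σ / θ)
        + 4 / 3 * max (δ 1) (4 / θ)) :
    ∀ k, 1 ≤ k → δ k ≤ C / (k : ℝ) ^ α := by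
  obtain ⟨hα1, hα2⟩ := hα
  obtain rfl : L = augLagrangian f g A b β := funext fun x => funext (hL x)
  have hη0 : ∀ k, 1 ≤ k → 0 < η k := fun k hk => by rw [hη k hk]; positivity
  have hsum := summable_succ_of_eq_div_rpow (by linarith) hη
  have htsum : 0 < ∑' k, η (k + 1) :=
    hsum.tsum_pos (fun k => (hη0 (k + 1) k.succ_pos).le) 0 (hη0 1 le_rfl)
  have hB2 : B ^ 2 = ‖lam 1 - lamstar‖ ^ 2 + 2 * β * ∑' k, η (k + 1) := by
    rw [hB, Real.sq_sqrt (by positivity)]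
  have hB0 : 0 < B ^ 2 := by rw [hB2]; positivity
  have hθ0 : 0 < θ := by rw [hθ]; positivity
  have hbound k (hk : 1 ≤ k) : ‖lam k - lamstar‖ ^ 2 ≤ 2 * B ^ 2 := by
    have := norm_sub_sq_le_add_tsum hβ.le hf hf' hd hstar happrox hlam
      (fun k hk => (hη0 k hk).le) hsum k hk
    linarith [sq_nonneg ‖lam 1 - lamstar‖]
  have hrec k (hk : 1 ≤ k) : 2 * η k ≤ δ (k + 1) →
      δ (k + 1) + θ * (δ (k + 1) - 2 * η k) ^ 2 ≤ δ k + η k := by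
    rw [hδ, hδ, hlam k hk]
    refine IsApproxALSolution.gap_recursion (happrox k hk) hβ.le hf (hf' _) hd hθ0.le
      (le_of_eq ?_) (hbound k hk)
    rw [hθ, show 2 * (β / (4 * B ^ 2)) * (2 * B ^ 2) = β / (4 * B ^ 2) * (4 * B ^ 2) by ring,
      div_mul_cancel₀ β (by positivity)]
  obtain ⟨hMC, hC4, hCθ⟩ := dual_rate_constant_bounds hθ0 hσ (le_max_right (δ 1) _) hC
  exact le_div_rpow_of_gap_recursion hθ0.le hσ.le (by linarith) hα2 hC4 hCθ hη
    ((le_max_left _ _).trans hMC) hrec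

/-- **Theorem 3 (dual rate).**
Let `σ > 0`, `α ∈ (1/2, 1]`, and `η_k = σ/k^{2α}` for all `k ≥ 1`. Then for all `k ≥ 1`:
`δ_k ≤ C/k^α`, where `C := 4√(3((3/2)θσ + 1)σ/θ) + (4/3)·max{δ₁, 4/θ}`. -/
theorem ial_dual_rate
    {n m : ℕ}
    (A : EuclideanSpace ℝ (Fin n) →L[ℝ] EuclideanSpace ℝ (Fin m))
    (b : EuclideanSpace ℝ (Fin m))
    (f g : EuclideanSpace ℝ (Fin n) → ℝ)
    (f' : EuclideanSpace ℝ (Fin n) → EuclideanSpace ℝ (Fin n))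
    (hf : ConvexOn ℝ Set.univ f)
    (hf' : ∀ x, HasGradientAt f (f' x) x)
    (hg : ConvexOn ℝ Set.univ g)
    (β : ℝ) (hβ : 0 < β)
    (L : EuclideanSpace ℝ (Fin n) → EuclideanSpace ℝ (Fin m) → ℝ)
    (hL : ∀ x lam, L x lam
        = f x + ⟪lam, A x - b⟫ + β / 2 * ‖A x - b‖ ^ 2 + g x)
    (d : EuclideanSpace ℝ (Fin m) → ℝ)
    (hd : ∀ lam, IsLeast (Set.range fun x => L x lam) (d lam))
    (x : ℕ → EuclideanSpace ℝ (Fin n))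
    (lam : ℕ → EuclideanSpace ℝ (Fin m))
    (σ α : ℝ) (hσ : 0 < σ) (hα : 1 / 2 < α ∧ α ≤ 1)
    (η : ℕ → ℝ)
    (hη : ∀ k, 1 ≤ k → η k = σ / (k : ℝ) ^ (2 * α))
    (happrox : ∀ k, 1 ≤ k → ∀ y,
        ⟪f' (x (k + 1)) + A.adjoint (lam k + β • (A (x (k + 1)) - b)), x (k + 1) - y⟫
          + g (x (k + 1)) - g y ≤ η k)
    (hlam : ∀ k, 1 ≤ k → lam (k + 1) = lam k + β • (A (x (k + 1)) - b))
    (lamstar : EuclideanSpace ℝ (Fin m))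
    (hstar : ∀ μ, d μ ≤ d lamstar)
    (δ : ℕ → ℝ)
    (hδ : ∀ k, δ k = d lamstar - d (lam k))
    (B : ℝ)
    (hB : B = Real.sqrt (‖lam 1 - lamstar‖ ^ 2 + 2 * β * ∑' k : ℕ, η (k + 1)))
    (θ : ℝ)
    (hθ : θ = β / (4 * B ^ 2))
    (C : ℝ)
    (hC : C = 4 * Real.sqrt (3 * (3 / 2 * θ * σ + 1) * σ / θ)
        + 4 / 3 * max (δ 1) (4 / θ)) :
    ∀ k, 1 ≤ k → δ k ≤ C / (k : ℝ) ^ α :=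
  ial_dual_rate_general A b f g f' hf hf' β hβ L hL d hd x lam σ α hσ hα η hη happrox hlam lamstar
    hstar δ hδ B hB θ hθ C hC
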